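/- Let q be a prime power, ℓ a divisor of q − 1, and let p₁, …, p_r be all the primes dividing q − 1 that do not divide ℓ. Let N(l₁, l₂) count elements α in some fixed finite set such that α is l₁-free and g(α) is l₂-free (for a fixed function g on F_q avoiding poles). Then N(q−1, q−1) ≥ ∑_{i=1}^r N(p_i ℓ, ℓ) + ∑_{i=1}^r N(ℓ, p_i ℓ) − (2r − 1)·N(ℓ, ℓ). -/

import Mathlib

/-! Sieve by counting each `α ∈ A` separately. With the `2r` conditions `R i` ("`α` is
`pᵢℓ`-free and `g α` is `ℓ`-free", resp. the other way round) and `Q` ("`α` and `g α` are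
`ℓ`-free"), `α` contributes `#{i | R i α} - (2r - 1)·[Q α]` to the right-hand side. This is `0`
unless `Q α` holds, at most `0` unless every `R i α` holds, and `1` if they all do; but then `α`
and `g α` are free for `ℓ` and every `pᵢℓ`, hence `(q - 1)`-free, because each prime divisor
of `q - 1` divides `ℓ` or is some `pᵢ`.
-/

open scoped Classical

/-- `α ∈ F_q^*` is `s`-free if for every divisor `d ≠ 1` of `s`,
`α` is not a `d`-th power in `F_q`. -/
def IsFree {F : Type*} [Field F] [Fintype F] (s : ℕ) (α : Fˣ) : Prop :=
  ∀ d : ℕ, d ∣ s → d ≠ 1 → ¬∃ β : F, β ^ d = (α : F)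

section Sieve

variable {α ι : Type*} [Fintype ι] (A : Finset α) (P Q : α → Prop) (R : ι → α → Prop)

theorem sieve_indicator_le [DecidablePred P] [DecidablePred Q] [∀ i, DecidablePred (R i)]
    (hRQ : ∀ i a, R i a → Q a) (hP : ∀ a, Q a → (∀ i, R i a) → P a) (a : α) :
    ∑ i, (if R i a then (1 : ℤ) else 0) - (Fintype.card ι - 1) * (if Q a then 1 else 0) ≤
      if P a then 1 else 0 := by
  have hP_nonneg : (0 : ℤ) ≤ if P a then 1 else 0 := by split_ifs <;> norm_num
  rw [Finset.sum_boole]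
  by_cases hQ : Q a
  · rw [if_pos hQ, mul_one]
    by_cases hR : ∀ i, R i a
    · rw [if_pos (hP a hQ hR), Finset.filter_true_of_mem fun i _ => hR i, Finset.card_univ]
      simp
    · obtain ⟨i, hi⟩ := not_forall.mp hR
      have hlt : (Finset.univ.filter (R · a)).card < Fintype.card ι :=
        Finset.card_lt_univ_of_notMem (by simpa using hi)
      have : ((Finset.univ.filter (R · a)).card : ℤ) ≤ Fintype.card ι - 1 := by omega
      linarith
  · have hempty : Finset.univ.filter (R · a) = ∅ :=
      Finset.filter_false_of_mem fun i _ h => hQ (hRQ i a h)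
    simpa [hempty, hQ] using hP_nonneg

theorem sum_card_filter_sub_le [DecidablePred P] [DecidablePred Q] [∀ i, DecidablePred (R i)]
    (hRQ : ∀ i a, R i a → Q a) (hP : ∀ a, Q a → (∀ i, R i a) → P a) :
    ∑ i, ((A.filter (R i)).card : ℤ) - (Fintype.card ι - 1) * (A.filter Q).card ≤
      (A.filter P).card := by
  simp only [Finset.card_filter, Nat.cast_sum, Nat.cast_ite, Nat.cast_one, Nat.cast_zero]
  rw [Finset.sum_comm, Finset.mul_sum, ← Finset.sum_sub_distrib]
  exact Finset.sum_le_sum fun a _ => sieve_indicator_le P Q R hRQ hP a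

end Sieve

namespace IsFree

variable {F : Type*} [Field F] [Fintype F] {α : Fˣ}

theorem of_dvd {s e : ℕ} (hs : IsFree s α) (h : e ∣ s) : IsFree e α :=
  fun d hd => hs d (hd.trans h)

theorem of_forall_prime {s : ℕ}
    (h : ∀ t : ℕ, t.Prime → t ∣ s → ¬∃ β : F, β ^ t = (α : F)) : IsFree s α := by
  rintro d hds hd1 ⟨β, hβ⟩
  obtain ⟨t, ht, htd⟩ := Nat.exists_prime_and_dvd hd1
  refine h t ht (htd.trans hds) ⟨β ^ (d / t), ?_⟩
  rw [← pow_mul, Nat.div_mul_cancel htd, hβ]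

theorem of_forall_prime_mul {s ℓ r : ℕ} {p : Fin r → ℕ}
    (hall : ∀ t : ℕ, t.Prime → t ∣ s → ¬ t ∣ ℓ → ∃ i, p i = t)
    (hℓ : IsFree ℓ α) (hp : ∀ i, IsFree (p i * ℓ) α) : IsFree s α := by
  refine of_forall_prime fun t ht hts => ?_
  by_cases htℓ : t ∣ ℓ
  · exact hℓ t htℓ ht.ne_one
  · obtain ⟨i, rfl⟩ := hall t ht hts htℓ
    exact hp i (p i) (dvd_mul_right _ _) ht.ne_one

end IsFree

theorem sieve_inequality_general (F : Type*) [Field F] [Fintype F]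
    (q : ℕ)
    (ℓ : ℕ)
    (r : ℕ) (p : Fin r → ℕ)
    (hall : ∀ s : ℕ, s.Prime → s ∣ q - 1 → ¬ s ∣ ℓ → ∃ i, p i = s)
    (A : Finset Fˣ) (g : Fˣ → Fˣ)
    (N : ℕ → ℕ → ℕ)
    (hN : ∀ l₁ l₂ : ℕ, N l₁ l₂ =
      (A.filter (fun α => IsFree l₁ α ∧ IsFree l₂ (g α))).card) :
    (N (q - 1) (q - 1) : ℤ) ≥
      ∑ i, (N (p i * ℓ) ℓ : ℤ) + ∑ i, (N ℓ (p i * ℓ) : ℤ)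
        - (2 * r - 1) * (N ℓ ℓ : ℤ) := by
  have hsieve := sum_card_filter_sub_le A
    (fun α => IsFree (q - 1) α ∧ IsFree (q - 1) (g α)) (fun α => IsFree ℓ α ∧ IsFree ℓ (g α))
    (Sum.elim (fun i α => IsFree (p i * ℓ) α ∧ IsFree ℓ (g α))
      (fun i α => IsFree ℓ α ∧ IsFree (p i * ℓ) (g α)))
    (by
      rintro (i | i) α ⟨h₁, h₂⟩
      exacts [⟨h₁.of_dvd (dvd_mul_left _ _), h₂⟩, ⟨h₁, h₂.of_dvd (dvd_mul_left _ _)⟩])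
    (fun α hQ hR => ⟨IsFree.of_forall_prime_mul hall hQ.1 fun i => (hR (.inl i)).1,
      IsFree.of_forall_prime_mul hall hQ.2 fun i => (hR (.inr i)).2⟩)
  simp only [Fintype.sum_sum_type, Sum.elim_inl, Sum.elim_inr, Fintype.card_sum,
    Fintype.card_fin] at hsieve
  simp only [hN, two_mul]
  push_cast at hsieve
  -- the filters over the `Sum.elim` family carry different decidability instances
  convert hsieve using 6 <;> congr

theorem sieve_inequality (F : Type*) [Field F] [Fintype F]
    (q : ℕ) (hq : Fintype.card F = q)
    (ℓ : ℕ) (hℓ : ℓ ∣ q - 1)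
    (r : ℕ) (p : Fin r → ℕ) (hp : ∀ i, (p i).Prime) (hinj : Function.Injective p)
    (hdvd : ∀ i, p i ∣ q - 1) (hndvd : ∀ i, ¬ p i ∣ ℓ)
    (hall : ∀ s : ℕ, s.Prime → s ∣ q - 1 → ¬ s ∣ ℓ → ∃ i, p i = s)
    (A : Finset Fˣ) (g : Fˣ → Fˣ)
    (N : ℕ → ℕ → ℕ)
    (hN : ∀ l₁ l₂ : ℕ, N l₁ l₂ =
      (A.filter (fun α => IsFree l₁ α ∧ IsFree l₂ (g α))).card) :
    (N (q - 1) (q - 1) : ℤ) ≥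
      ∑ i, (N (p i * ℓ) ℓ : ℤ) + ∑ i, (N ℓ (p i * ℓ) : ℤ)
        - (2 * r - 1) * (N ℓ ℓ : ℤ) :=
  sieve_inequality_general F q ℓ r p hall A g N hN
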